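/- Let L, L' be DGLAs, Q, Q' ∈ L¹ two Maurer–Cartan elements such that Q − Q' lies in a subspace S ⊆ L on which all higher structure maps of an L∞-morphism F vanish when at least one argument is in S and n ≥ 2, and F₁ restricted to S is the identity/inclusion. Then the twisted L∞-morphisms F_Q and F_{Q'} agree on arguments, i.e., (F_Q)_n(s₁,…,s_n) = (F_{Q'})_n(s₁,…,s_n) for all n ≥ 1 whenever F_{n+k}(Q₁,…,Q_k, s₁,…,s_n) is multilinear-symmetric and the difference terms vanish. -/

import Mathlib

open scoped Classical

noncomputable section

/-- The Koszul sign of a permutation `σ` acting on homogeneous elements of degrees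
`deg i`: the product of `(-1)^{deg i · deg j}` over all inversions of `σ`. -/
def koszulSign {n : ℕ} (deg : Fin n → ℤ) (σ : Equiv.Perm (Fin n)) : ℝ :=
  ∏ p ∈ Finset.univ.filter (fun p : Fin n × Fin n => p.1 < p.2 ∧ σ p.2 < σ p.1),
    (-1 : ℝ) ^ (deg (σ p.1) * deg (σ p.2)).natAbs

/-- `(k, n-k)`-unshuffles: permutations of `Fin n` that are strictly increasing on the
first `k` and on the last `n - k` positions. -/
def unshuffles (k n : ℕ) : Finset (Equiv.Perm (Fin n)) :=
  Finset.univ.filter fun σ =>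
    (∀ a b : Fin n, a < b → (b : ℕ) < k → σ a < σ b) ∧
    (∀ a b : Fin n, a < b → k ≤ (a : ℕ) → σ a < σ b)

/-- A (ℤ-graded) differential graded Lie algebra over ℝ, equipped with a complete
(here: nilpotent) decreasing filtration, encoded by an internal family of graded
pieces `gr i` together with a differential `d` of degree `+1` and a bracket `b`
of degree `0` satisfying the graded antisymmetry, Leibniz and Jacobi identities
on homogeneous elements. -/
structure FilteredDGLA (L : Type*) [AddCommGroup L] [Module ℝ L] where
  /-- the grading -/
  gr : ℤ → Submodule ℝ L
  /-- every element decomposes into homogeneous pieces -/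
  internal : DirectSum.IsInternal gr
  /-- the differential -/
  d : L →ₗ[ℝ] L
  /-- the Lie bracket -/
  b : L →ₗ[ℝ] L →ₗ[ℝ] L
  d_gr : ∀ (i : ℤ) (x : L), x ∈ gr i → d x ∈ gr (i + 1)
  b_gr : ∀ (i j : ℤ) (x y : L), x ∈ gr i → y ∈ gr j → b x y ∈ gr (i + j)
  d_sq : ∀ x, d (d x) = 0
  antisymm : ∀ (i j : ℤ) (x y : L), x ∈ gr i → y ∈ gr j →
    b x y = -(((-1 : ℝ) ^ (i * j).natAbs) • b y x)
  leibniz : ∀ (i : ℤ) (x y : L), x ∈ gr i →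
    d (b x y) = b (d x) y + ((-1 : ℝ) ^ i.natAbs) • b x (d y)
  jacobi : ∀ (i j k : ℤ) (x y z : L), x ∈ gr i → y ∈ gr j → z ∈ gr k →
    ((-1 : ℝ) ^ (i * k).natAbs) • b x (b y z)
      + ((-1 : ℝ) ^ (j * i).natAbs) • b y (b z x)
      + ((-1 : ℝ) ^ (k * j).natAbs) • b z (b x y) = 0
  /-- the decreasing filtration -/
  filt : ℕ → Submodule ℝ L
  filt_anti : ∀ m, filt (m + 1) ≤ filt m
  filt_zero : filt 0 = ⊤
  d_filt : ∀ (m : ℕ) (x : L), x ∈ filt m → d x ∈ filt m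
  b_filt : ∀ (m n : ℕ) (x y : L), x ∈ filt m → y ∈ filt n → b x y ∈ filt (m + n)
  /-- completeness in the strongest (nilpotent) form -/
  nilpotent : ∃ N, filt N = ⊥

/-- A Maurer–Cartan element of a (filtered) DGLA: an element of degree `1` and
filtration degree `≥ 1` with `dQ + ½[Q,Q] = 0`. -/
def FilteredDGLA.IsMC {L : Type*} [AddCommGroup L] [Module ℝ L]
    (G : FilteredDGLA L) (Q : L) : Prop :=
  Q ∈ G.gr 1 ∧ Q ∈ G.filt 1 ∧ G.d Q + (1 / 2 : ℝ) • G.b Q Q = 0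

/-- An (filtered) L∞-morphism between two DGLAs: a collection of graded-symmetric
multilinear maps `F n : Lⁿ → L'` of degree `1 - n`, compatible with the filtrations,
satisfying the L∞-morphism equations (written here on homogeneous arguments, with
all Koszul signs expressed via `koszulSign`; the three groups of terms on the right
hand side correspond to the differential of `L`, the bracket of `L` and the bracket
of `L'`). -/
structure LInftyMorphism
    (L : Type*) [AddCommGroup L] [Module ℝ L]
    (L' : Type*) [AddCommGroup L'] [Module ℝ L']
    (HA : FilteredDGLA L) (HB : FilteredDGLA L') where
  F : ∀ n : ℕ, MultilinearMap ℝ (fun _ : Fin n => L) L'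
  degree : ∀ (n : ℕ) (deg : Fin n → ℤ) (x : Fin n → L),
    (∀ i, x i ∈ HA.gr (deg i)) → F n x ∈ HB.gr ((∑ i, deg i) + 1 - n)
  sym : ∀ (n : ℕ) (deg : Fin n → ℤ) (x : Fin n → L) (σ : Equiv.Perm (Fin n)),
    (∀ i, x i ∈ HA.gr (deg i)) → F n (x ∘ σ) = koszulSign deg σ • F n x
  filt_compat : ∀ (n : ℕ) (m : Fin n → ℕ) (x : Fin n → L),
    (∀ i, x i ∈ HA.filt (m i)) → F n x ∈ HB.filt (∑ i, m i)
  rel : ∀ (n : ℕ), 1 ≤ n → ∀ (deg : Fin n → ℤ) (x : Fin n → L),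
    (∀ i, x i ∈ HA.gr (deg i)) →
    HB.d (F n x)
      = (∑ i : Fin n,
          ((-1 : ℝ) ^ (∑ m ∈ Finset.univ.filter (· < i), deg m).natAbs) •
            F n (Function.update x i (HA.d (x i))))
        + (if h2 : 2 ≤ n then
            ∑ σ ∈ unshuffles 2 n, koszulSign deg σ •
              F (n - 1) (fun t : Fin (n - 1) =>
                if (t : ℕ) = 0 then
                  HA.b (x (σ ⟨0, by omega⟩)) (x (σ ⟨1, by omega⟩))
                else x (σ ⟨(t : ℕ) + 1, by have := t.isLt; omega⟩))
          else 0)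
        + ∑ k : Fin n,
            (if (k : ℕ) = 0 then 0 else
              ∑ σ ∈ unshuffles k n, koszulSign deg σ •
                HB.b
                  (F k (fun s : Fin (k : ℕ) =>
                    x (σ ⟨(s : ℕ), lt_trans s.isLt k.isLt⟩)))
                  (F (n - (k : ℕ)) (fun s : Fin (n - (k : ℕ)) =>
                    x (σ ⟨(k : ℕ) + (s : ℕ), by have := s.isLt; omega⟩))))

variable {L : Type*} [AddCommGroup L] [Module ℝ L]
variable {L' : Type*} [AddCommGroup L'] [Module ℝ L']

/-- The structure maps of the twisted morphism:
`(F_Q)_n(s₁,…,s_n) = Σ_{k≥0} (1/k!) F_{k+n}(Q,…,Q,s₁,…,s_n)` (truncated at `N`; by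
nilpotency of the filtration this is the full sum as soon as `filt N = ⊥`). -/
def twistedMap {HA : FilteredDGLA L} {HB : FilteredDGLA L'}
    (Φ : LInftyMorphism L L' HA HB) (Q : L) (N : ℕ)
    (n : ℕ) (x : Fin n → L) : L' :=
  ∑ k ∈ Finset.range (N + 1),
    ((k.factorial : ℝ)⁻¹) • Φ.F (k + n) (Fin.append (fun _ : Fin k => Q) x)


/-- `Fin.append` computed pointwise. -/
theorem appendApply {α : Type*} {k n : ℕ} (u : Fin k → α) (v : Fin n → α) (i : Fin (k+n)) :
    Fin.append u v i
      = if h : (i:ℕ) < k then u ⟨i, h⟩ else v ⟨(i:ℕ) - k, by have := i.isLt; omega⟩ := by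
  split
  · next h =>
      have e : i = Fin.castAdd n ⟨i, h⟩ := Fin.ext rfl
      conv_lhs => rw [e]
      exact Fin.append_left u v _
  · next h =>
      have e : i = Fin.natAdd k ⟨(i:ℕ)-k, by have := i.isLt; omega⟩ := Fin.ext (by simp; omega)
      conv_lhs => rw [e]
      exact Fin.append_right u v _

theorem koszulSign_ne_zero {n : ℕ} (deg : Fin n → ℤ) (σ : Equiv.Perm (Fin n)) :
    koszulSign deg σ ≠ 0 :=
  Finset.prod_ne_zero_iff.2 fun _ _ => pow_ne_zero _ (by norm_num)

/-- If all higher structure maps vanish when the first argument lies in `S`, then by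
graded symmetry they vanish when any argument lies in `S`. -/
theorem vanish_any {HA : FilteredDGLA L} {HB : FilteredDGLA L'}
    (Φ : LInftyMorphism L L' HA HB) (S : Submodule ℝ L)
    (hvanish : ∀ (n : ℕ) (hn : 2 ≤ n) (x : Fin n → L),
      x ⟨0, by omega⟩ ∈ S → Φ.F n x = 0)
    {m : ℕ} (hm : 2 ≤ m) (deg : Fin m → ℤ) (y : Fin m → L)
    (hy : ∀ i, y i ∈ HA.gr (deg i)) (j : Fin m) (hj : y j ∈ S) :
    Φ.F m y = 0 := by
  have h0 : (0:ℕ) < m := by omega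
  set σ : Equiv.Perm (Fin m) := Equiv.swap ⟨0, h0⟩ j with hσ
  have hsym := Φ.sym m deg y σ hy
  have hz : Φ.F m (y ∘ σ) = 0 := by
    apply hvanish m hm
    show y (σ ⟨0, by omega⟩) ∈ S
    have hσ0 : σ ⟨0, by omega⟩ = j := Equiv.swap_apply_left _ _
    rw [hσ0]; exact hj
  rw [hsym] at hz
  exact (smul_eq_zero.1 hz).resolve_left (koszulSign_ne_zero _ _)

/-- Key lemma: on homogeneous arguments, prepending `k` copies of `Q` or of `Q'`
gives the same value. -/
theorem keyA {HA : FilteredDGLA L} {HB : FilteredDGLA L'}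
    (Φ : LInftyMorphism L L' HA HB)
    (Q Q' : L) (hQ1 : Q ∈ HA.gr 1) (hQ'1 : Q' ∈ HA.gr 1)
    (S : Submodule ℝ L) (hs : Q - Q' ∈ S)
    (hvanish : ∀ (n : ℕ) (hn : 2 ≤ n) (x : Fin n → L),
      x ⟨0, by omega⟩ ∈ S → Φ.F n x = 0)
    (k n : ℕ) (hn : 1 ≤ n) (deg : Fin n → ℤ) (z : Fin n → L)
    (hz : ∀ i, z i ∈ HA.gr (deg i)) :
    Φ.F (k + n) (Fin.append (fun _ => Q) z)
      = Φ.F (k + n) (Fin.append (fun _ => Q') z) := by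
  have claim : ∀ j, j ≤ k →
      Φ.F (k + n) (Fin.append (fun t : Fin k => if (t:ℕ) < j then Q' else Q) z)
        = Φ.F (k + n) (Fin.append (fun _ : Fin k => Q) z) := by
    intro j
    induction j with
    | zero =>
        intro _
        have : (fun t : Fin k => if (t:ℕ) < 0 then Q' else Q) = fun _ : Fin k => Q := by
          funext t; simp
        rw [this]
    | succ j ih =>
        intro hjk
        have hjk' : j < k := by omega
        have hjm : j < k + n := by omega
        set jj : Fin (k + n) := ⟨j, hjm⟩ with hjj
        set w : Fin (k + n) → L :=
          Fin.append (fun t : Fin k => if (t:ℕ) < j then Q' else Q) z with hw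
        have h1 : Fin.append (fun t : Fin k => if (t:ℕ) < j+1 then Q' else Q) z
            = Function.update w jj Q' := by
          funext i
          rcases eq_or_ne i jj with rfl | hne
          · rw [Function.update_self, appendApply]
            have : ((jj:ℕ) : ℕ) < k := hjk'
            rw [dif_pos this]
            simp [hjj]
          · rw [Function.update_of_ne hne, hw, appendApply, appendApply]
            split
            · next h =>
                have hij : (i:ℕ) ≠ j := fun hh => hne (Fin.ext hh)
                have hiff : ((i:ℕ) < j + 1) ↔ ((i:ℕ) < j) := by omega
                rw [if_congr hiff rfl rfl]
            · rfl
        have h2 : Φ.F (k + n) (Function.update w jj Q) = Φ.F (k + n) w := by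
          congr 1
          funext i
          rcases eq_or_ne i jj with rfl | hne
          · rw [Function.update_self, hw, appendApply]
            have hlt : ((jj:ℕ) : ℕ) < k := hjk'
            rw [dif_pos hlt]
            simp [hjj]
          · rw [Function.update_of_ne hne]
        have hdiff : Φ.F (k + n) (Function.update w jj (Q' - Q))
            = Φ.F (k + n) (Function.update w jj Q') - Φ.F (k + n) (Function.update w jj Q) :=
          (Φ.F (k + n)).map_update_sub w jj Q' Q
        have hzero : Φ.F (k + n) (Function.update w jj (Q' - Q)) = 0 := by
          have hm2 : 2 ≤ k + n := by omega
          refine vanish_any Φ S hvanish hm2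
            (fun i => if h : (i:ℕ) < k then 1 else deg ⟨(i:ℕ) - k, by have := i.isLt; omega⟩)
            _ ?_ jj ?_
          · intro i
            beta_reduce
            rcases eq_or_ne i jj with rfl | hne
            · rw [Function.update_self]
              have hlt : ((jj:ℕ) : ℕ) < k := hjk'
              rw [dif_pos hlt]
              exact Submodule.sub_mem _ hQ'1 hQ1
            · rw [Function.update_of_ne hne, hw, appendApply]
              split
              · next h =>
                  split
                  · exact hQ'1
                  · exact hQ1
              · next h => exact hz _
          · rw [Function.update_self]
            rw [show Q' - Q = -(Q - Q') from (neg_sub Q Q').symm]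
            exact Submodule.neg_mem _ hs
        have hQ'eq : Φ.F (k + n) (Function.update w jj Q')
            = Φ.F (k + n) (Function.update w jj Q) :=
          sub_eq_zero.mp (hdiff.symm.trans hzero)
        rw [h1, hQ'eq, h2]
        exact ih (by omega)
  have hk := claim k le_rfl
  have : (fun t : Fin k => if (t:ℕ) < k then Q' else Q) = fun _ : Fin k => Q' := by
    funext t; simp [t.isLt]
  rw [this] at hk
  exact hk.symm

/-- Every element decomposes as a finite sum of homogeneous components. -/
theorem decomposeGr (HA : FilteredDGLA L) (x : L) :
    ∃ (s : Finset ℤ) (c : ℤ → L), (∀ d, c d ∈ HA.gr d) ∧ x = ∑ d ∈ s, c d := by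
  have hx : x ∈ ⨆ i, HA.gr i := by
    rw [HA.internal.submodule_iSup_eq_top]; trivial
  rw [Submodule.mem_iSup_iff_exists_dfinsupp'] at hx
  obtain ⟨f, hf⟩ := hx
  exact ⟨f.support, fun d => (f d : L), fun d => (f d).2, by rw [← hf]; rfl⟩

/-- let `F` be an L∞-morphism between complete filtered (nilpotent)
DGLAs, `Q, Q'` Maurer–Cartan elements of `L` with `Q − Q' ∈ S` for a subspace
`S ⊆ L` such that `F_n(γ, α₂, …, α_n) = 0` for all `n ≥ 2` whenever `γ ∈ S`.
Then the twisted L∞-morphisms `F_Q` and `F_{Q'}` agree: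
`(F_Q)_n(s₁,…,s_n) = (F_{Q'})_n(s₁,…,s_n)` for all `n ≥ 1`. -/
theorem twisted_linfty_morphisms_agree
    (HA : FilteredDGLA L) (HB : FilteredDGLA L')
    (Φ : LInftyMorphism L L' HA HB)
    (Q Q' : L) (hQ : HA.IsMC Q) (hQ' : HA.IsMC Q')
    (S : Submodule ℝ L) (hQQ' : Q - Q' ∈ S)
    (hvanish : ∀ (n : ℕ) (hn : 2 ≤ n) (x : Fin n → L),
      x ⟨0, by omega⟩ ∈ S → Φ.F n x = 0)
    (N : ℕ) (hN : HB.filt N = ⊥) :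
    ∀ n : ℕ, 1 ≤ n → ∀ x : Fin n → L,
      twistedMap Φ Q N n x = twistedMap Φ Q' N n x := by
  intro n hn x
  unfold twistedMap
  refine Finset.sum_congr rfl fun k _ => ?_
  congr 1
  choose s c hc hx using fun i : Fin n => decomposeGr HA (x i)
  have eQ : ∀ R : L, Fin.append (fun _ : Fin k => R) x
      = fun i : Fin (k+n) =>
          ∑ d ∈ (if h : (i:ℕ) < k then {1}
                 else s ⟨(i:ℕ) - k, by have := i.isLt; omega⟩ : Finset ℤ),
            (if h : (i:ℕ) < k then R
             else c ⟨(i:ℕ) - k, by have := i.isLt; omega⟩ d) := by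
    intro R
    funext i
    rw [appendApply]
    split
    · next h => simp
    · next h => exact hx _
  rw [eQ Q, eQ Q', MultilinearMap.map_sum_finset, MultilinearMap.map_sum_finset]
  refine Finset.sum_congr rfl fun r hr => ?_
  set deg : Fin n → ℤ := fun t => r (Fin.natAdd k t) with hdeg
  set z : Fin n → L := fun t => c t (deg t) with hzdef
  have key : ∀ R : L,
      (fun i : Fin (k+n) => if h : (i:ℕ) < k then R
          else c ⟨(i:ℕ) - k, by have := i.isLt; omega⟩ (r i))
        = Fin.append (fun _ : Fin k => R) z := by
    intro R
    funext i
    rw [appendApply]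
    split
    · next h => rfl
    · next h =>
        have hrw : Fin.natAdd k (⟨(i:ℕ) - k, by have := i.isLt; omega⟩ : Fin n) = i :=
          Fin.ext (by simp; omega)
        show c _ (r i) = c _ (r (Fin.natAdd k _))
        rw [hrw]
  rw [key Q, key Q']
  exact keyA Φ Q Q' hQ.1 hQ'.1 S hQQ' hvanish k n hn deg z fun t => hc t _
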